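/- Under the hypotheses of Theorem 2 (f bounded measurable on a compact metric space Ω with homeomorphism T and ergodic Borel probability measure μ, f essentially discontinuous at some ω₀ and continuous at Tⁿ(ω₀) for all n < 0), there exist two potentials V, W in the support of the induced measure ν on [−λ,λ]^ℤ such that V(n) = W(n) for all n < 0 but V(0) ≠ W(0). -/

import Mathlib

open Filter MeasureTheory

/-- `l` is an essential limit of `f` at `ω₀` w.r.t. the measure `μ`. -/
def IsEssentialLimit {Ω : Type*} [TopologicalSpace Ω] [MeasurableSpace Ω]
    (μ : Measure Ω) (f : Ω → ℝ) (ω₀ : Ω) (l : ℝ) : Prop :=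
  ∃ Ωs : ℕ → Set Ω, (∀ k, 0 < μ (Ωs k)) ∧
    ∀ x : ℕ → Ω, (∀ k, x k ∈ Ωs k) →
      Tendsto x atTop (nhds ω₀) ∧ Tendsto (fun k => f (x k)) atTop (nhds l)

/-- The (closed) support of a Borel measure. -/
def msupport {X : Type*} [TopologicalSpace X] [MeasurableSpace X]
    (ν : Measure X) : Set X := {x | ∀ U ∈ nhds x, 0 < ν U}

lemma isClosed_msupport {X : Type*} [TopologicalSpace X] [MeasurableSpace X]
    (ν : Measure X) : IsClosed (msupport ν) := by
  rw [← isOpen_compl_iff, isOpen_iff_mem_nhds]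
  intro x hx
  simp only [msupport, Set.mem_compl_iff, Set.mem_setOf_eq, not_forall] at hx
  obtain ⟨U, hU, hνU⟩ := hx
  obtain ⟨V, hVU, hVopen, hxV⟩ := mem_nhds_iff.1 hU
  refine Filter.mem_of_superset (hVopen.mem_nhds hxV) ?_
  intro y hy
  simp only [msupport, Set.mem_compl_iff, Set.mem_setOf_eq, not_forall]
  refine ⟨V, hVopen.mem_nhds hy, ?_⟩
  intro h
  exact hνU (lt_of_lt_of_le h (measure_mono hVU))

lemma msupport_compl_null {X : Type*} [TopologicalSpace X]
    [SecondCountableTopology X] [MeasurableSpace X]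
    (ν : Measure X) : ν (msupport ν)ᶜ = 0 := by
  obtain ⟨B, hBc, -, hB⟩ := TopologicalSpace.exists_countable_basis X
  set N : Set (Set X) := {U ∈ B | ν U = 0} with hN
  have hsub : (msupport ν)ᶜ ⊆ ⋃₀ N := by
    intro x hx
    simp only [msupport, Set.mem_compl_iff, Set.mem_setOf_eq, not_forall] at hx
    obtain ⟨U, hU, hνU⟩ := hx
    have hνU0 : ν U = 0 := by
      by_contra h
      exact hνU (pos_iff_ne_zero.2 h)
    obtain ⟨t, htB, hxt, htU⟩ := hB.mem_nhds_iff.1 hU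
    exact ⟨t, ⟨htB, le_antisymm (hνU0 ▸ measure_mono htU) zero_le⟩, hxt⟩
  refine measure_mono_null hsub ?_
  exact (measure_sUnion_null_iff (hBc.mono (Set.sep_subset _ _))).2 fun U hU => hU.2

lemma continuous_perm_zpow {Ω : Type*} [TopologicalSpace Ω] (T : Ω ≃ₜ Ω) (n : ℤ) :
    Continuous fun ω => ((T.toEquiv : Equiv.Perm Ω) ^ n) ω := by
  induction n using Int.induction_on with
  | zero => simpa using continuous_id'
  | succ k ih =>
      have : ∀ ω, ((T.toEquiv : Equiv.Perm Ω) ^ ((k : ℤ) + 1)) ω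
          = ((T.toEquiv : Equiv.Perm Ω) ^ (k : ℤ)) (T ω) := by
        intro ω
        rw [zpow_add_one]
        rfl
      simp only [this]
      exact ih.comp T.continuous
  | pred k ih =>
      have : ∀ ω, ((T.toEquiv : Equiv.Perm Ω) ^ (-(k : ℤ) - 1)) ω
          = ((T.toEquiv : Equiv.Perm Ω) ^ (-(k : ℤ))) (T.symm ω) := by
        intro ω
        rw [zpow_sub_one]
        rfl
      simp only [this]
      exact ih.comp T.symm.continuous

theorem stmt8 {Ω : Type*} [MetricSpace Ω] [CompactSpace Ω]
    [MeasurableSpace Ω] [BorelSpace Ω]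
    (μ : Measure Ω) [IsProbabilityMeasure μ]
    (T : Ω ≃ₜ Ω) (hT : Ergodic T μ)
    (lam : ℝ) (hlam : 0 < lam) (f : Ω → ℝ) (hf : Measurable f)
    (hbdd : ∀ ω, |f ω| ≤ lam)
    (ω₀ : Ω)
    (hdisc : ∃ l l' : ℝ, l ≠ l' ∧ IsEssentialLimit μ f ω₀ l ∧ IsEssentialLimit μ f ω₀ l')
    (hcont : ∀ n : ℤ, n < 0 → ContinuousAt f (((T.toEquiv : Equiv.Perm Ω) ^ n) ω₀)) :
    ∃ V W : ℤ → ℝ,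
      V ∈ msupport (μ.map (fun ω => fun n : ℤ => f (((T.toEquiv : Equiv.Perm Ω) ^ n) ω))) ∧
      W ∈ msupport (μ.map (fun ω => fun n : ℤ => f (((T.toEquiv : Equiv.Perm Ω) ^ n) ω))) ∧
      (∀ n : ℤ, n < 0 → V n = W n) ∧ V 0 ≠ W 0 := by
  obtain ⟨l, l', hll', hl, hl'⟩ := hdisc
  set Φ : Ω → (ℤ → ℝ) := fun ω => fun n : ℤ => f (((T.toEquiv : Equiv.Perm Ω) ^ n) ω) with hΦ
  have hΦm : Measurable Φ :=
    measurable_pi_lambda _ fun n => hf.comp (continuous_perm_zpow T n).measurable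
  set ν : Measure (ℤ → ℝ) := μ.map Φ with hν
  -- The preimage of the support has full measure
  have hS : μ (Φ ⁻¹' (msupport ν))ᶜ = 0 := by
    have hmeas : MeasurableSet (msupport ν)ᶜ :=
      ((isClosed_msupport ν).isOpen_compl).measurableSet
    calc μ (Φ ⁻¹' (msupport ν))ᶜ = μ (Φ ⁻¹' (msupport ν)ᶜ) := by rw [Set.preimage_compl]
      _ = ν (msupport ν)ᶜ := (Measure.map_apply hΦm hmeas).symm
      _ = 0 := msupport_compl_null ν
  -- the key construction, for an arbitrary essential limit
  have key : ∀ c : ℝ, IsEssentialLimit μ f ω₀ c →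
      ∃ V : ℤ → ℝ, V ∈ msupport ν ∧ V 0 = c ∧
        ∀ n : ℤ, n < 0 → V n = f (((T.toEquiv : Equiv.Perm Ω) ^ n) ω₀) := by
    intro c hc
    obtain ⟨Ωs, hpos, hconv⟩ := hc
    have hchoice : ∀ k : ℕ, ∃ ω, ω ∈ Ωs k ∩ Φ ⁻¹' (msupport ν) := by
      intro k
      by_contra h
      push_neg at h
      have hsub : Ωs k ⊆ (Φ ⁻¹' (msupport ν))ᶜ := fun ω hω hω' => h ω ⟨hω, hω'⟩
      exact absurd (measure_mono_null hsub hS) (hpos k).ne'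
    choose x hx using hchoice
    have hxΩ : ∀ k, x k ∈ Ωs k := fun k => (hx k).1
    have hxS : ∀ k, Φ (x k) ∈ msupport ν := fun k => (hx k).2
    obtain ⟨htend, hftend⟩ := hconv x hxΩ
    -- compactness of the product of intervals
    have hK : IsCompact (Set.univ.pi fun _ : ℤ => Set.Icc (-lam) lam) :=
      isCompact_univ_pi fun _ => isCompact_Icc
    have hmem : ∀ k, Φ (x k) ∈ Set.univ.pi fun _ : ℤ => Set.Icc (-lam) lam := by
      intro k
      intro n _
      exact abs_le.1 (hbdd _)
    obtain ⟨V, hVK, φ, hφ, hVconv⟩ := hK.tendsto_subseq hmem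
    refine ⟨V, ?_, ?_, ?_⟩
    · exact (isClosed_msupport ν).mem_of_tendsto hVconv
        (Filter.Eventually.of_forall fun k => hxS (φ k))
    · have h1 : Tendsto (fun k => Φ (x (φ k)) 0) atTop (nhds (V 0)) :=
        tendsto_pi_nhds.1 hVconv 0
      have h2 : Tendsto (fun k => Φ (x (φ k)) 0) atTop (nhds c) := by
        have : (fun k => Φ (x (φ k)) 0) = fun k => f (x (φ k)) := by
          funext k
          simp [hΦ]
        rw [this]
        exact hftend.comp hφ.tendsto_atTop
      exact tendsto_nhds_unique h1 h2
    · intro n hn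
      have h1 : Tendsto (fun k => Φ (x (φ k)) n) atTop (nhds (V n)) :=
        tendsto_pi_nhds.1 hVconv n
      have h2 : Tendsto (fun k => Φ (x (φ k)) n) atTop
          (nhds (f (((T.toEquiv : Equiv.Perm Ω) ^ n) ω₀))) := by
        have hT2 : Tendsto (fun k => ((T.toEquiv : Equiv.Perm Ω) ^ n) (x (φ k))) atTop
            (nhds (((T.toEquiv : Equiv.Perm Ω) ^ n) ω₀)) :=
          ((continuous_perm_zpow T n).continuousAt.tendsto).comp (htend.comp hφ.tendsto_atTop)
        exact ((hcont n hn).tendsto).comp hT2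
      exact tendsto_nhds_unique h1 h2
  obtain ⟨V, hVsupp, hV0, hVneg⟩ := key l hl
  obtain ⟨W, hWsupp, hW0, hWneg⟩ := key l' hl'
  refine ⟨V, W, hVsupp, hWsupp, ?_, ?_⟩
  · intro n hn
    rw [hVneg n hn, hWneg n hn]
  · rw [hV0, hW0]
    exact hll'
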